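/- arXiv:2010.08266 — 2 statements merged into one kernel-verified Lean document; each statement's English description precedes it below -/
import Mathlib

section
/- With U⁺, w, x₀, and B_U as above: if λ ∈ B_U is not an automorphism of U⁺ and λ²(x₀) = x₀, then λ(w) is adjacent to x₀ in U⁺. In particular, every reflection in B_U that is not an automorphism of U⁺ maps w to a leaf adjacent to x₀. -/
open SimpleGraph

/-- The degree of a vertex, defined via the neighbour set. -/
noncomputable def deg {V : Type*} (G : SimpleGraph V) (v : V) : ℕ := (G.neighborSet v).ncard

/-- `tau G v` is the number of neighbours of `v` of degree 2 in `G`. -/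
noncomputable def tau {V : Type*} (G : SimpleGraph V) (v : V) : ℕ :=
  {u ∈ G.neighborSet v | deg G u = 2}.ncard

/-- A (finite) graph is a cycle graph iff it is connected and 2-regular. -/
def IsCycleGraph {V : Type*} (G : SimpleGraph V) : Prop := G.Connected ∧ ∀ v, deg G v = 2

/-- A (finite) graph is a path graph iff it is a connected acyclic graph with maximum degree
at most two. -/
def IsPathGraph {V : Type*} (G : SimpleGraph V) : Prop :=
  G.Connected ∧ G.IsAcyclic ∧ ∀ v, deg G v ≤ 2

/-- The skeleton of `G`: the induced subgraph on vertices of degree at least 2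
(i.e. delete all leaves and isolated vertices). -/
def skeleton {V : Type*} (G : SimpleGraph V) : SimpleGraph {v : V | 2 ≤ deg G v} :=
  G.induce {v : V | 2 ≤ deg G v}

/-- A sunshine graph: a connected graph whose skeleton is a cycle. -/
def IsSunshine {V : Type*} (G : SimpleGraph V) : Prop := G.Connected ∧ IsCycleGraph (skeleton G)

/-- A caterpillar: a connected graph whose skeleton is a path. -/
def IsCaterpillar {V : Type*} (G : SimpleGraph V) : Prop := G.Connected ∧ IsPathGraph (skeleton G)

/-- The diameter of a finite graph: the maximum distance between two vertices. -/
noncomputable def diamNat {V : Type*} (G : SimpleGraph V) : ℕ :=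
  sSup (Set.range fun p : V × V => G.dist p.1 p.2)

/-- Graphs on `Fin n` up to isomorphism. -/
def graphSetoid (n : ℕ) : Setoid (SimpleGraph (Fin n)) where
  r G H := Nonempty (G ≃g H)
  iseqv := ⟨fun G => ⟨Iso.refl⟩, fun ⟨e⟩ => ⟨e.symm⟩, fun ⟨e⟩ ⟨f⟩ => ⟨e.trans f⟩⟩

/-- Isomorphism classes of graphs on `n` vertices. -/
abbrev IsoClass (n : ℕ) : Type := Quotient (graphSetoid n)

/-- The card `G - v`, transported to a graph on `Fin (|V| - 1)`. -/
noncomputable def cardAt {V : Type*} [Fintype V] [DecidableEq V] (G : SimpleGraph V) (v : V) :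
    SimpleGraph (Fin (Fintype.card V - 1)) :=
  G.comap fun i =>
    ((Fintype.equivOfCardEq
      (show Fintype.card (Fin (Fintype.card V - 1)) = Fintype.card {u : V // u ≠ v} by
        simp [Fintype.card_subtype_compl])) i : {u : V // u ≠ v}).val

/-- The deck of `G` : the multiset of isomorphism classes of its vertex-deleted subgraphs. -/
noncomputable def deck {V : Type*} [Fintype V] [DecidableEq V] (G : SimpleGraph V) :
    Multiset (IsoClass (Fintype.card V - 1)) :=
  Finset.univ.val.map fun v => Quotient.mk (graphSetoid (Fintype.card V - 1)) (cardAt G v)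

/-- The number of common cards of `G` and `H` : the cardinality of the multiset
intersection of their decks. -/
noncomputable def commonCards {V : Type*} [Fintype V] [DecidableEq V]
    (G H : SimpleGraph V) : ℕ :=
  letI := Classical.decEq (IsoClass (Fintype.card V - 1))
  Multiset.card (deck G ∩ deck H)

/-- `Gp` is a supercard of `G` : some card of `Gp` is isomorphic to `G`. -/
def IsSupercardOf {W V : Type*} (Gp : SimpleGraph W) (G : SimpleGraph V) : Prop :=
  ∃ w : W, Nonempty (G ≃g Gp.induce {u : W | u ≠ w})

/-- `l` is an active permutation of `Gp` with respect to `v` and `w`: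
`l ((Gp - w) - l⁻¹ v) = (Gp - v) - l w`. -/
def ActivePerm {V : Type*} (Gp : SimpleGraph V) (v w : V) (l : Equiv.Perm V) : Prop :=
  ∀ a b : V, a ≠ w → a ≠ l.symm v → b ≠ w → b ≠ l.symm v → (Gp.Adj a b ↔ Gp.Adj (l a) (l b))

/-- Property (b) of a saturating set: distinct permutations have distinct `l⁻¹ v` and
distinct `l w`. -/
def SatProp {V : Type*} (v w : V) (Y : Set (Equiv.Perm V)) : Prop :=
  ∀ l ∈ Y, ∀ p ∈ Y, l ≠ p → l.symm v ≠ p.symm v ∧ l w ≠ p w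

/-- `θ` maps `Up - w` isomorphically onto `Up - θ w` (the defining property of `B_U`). -/
def IsCardIso {V : Type*} (Up : SimpleGraph V) (w : V) (θ : Equiv.Perm V) : Prop :=
  ∀ a b : V, a ≠ w → b ≠ w → (Up.Adj a b ↔ Up.Adj (θ a) (θ b))

/-- `θ` is an automorphism of `G`. -/
def IsAutG {V : Type*} (G : SimpleGraph V) (θ : Equiv.Perm V) : Prop :=
  ∀ a b, G.Adj (θ a) (θ b) ↔ G.Adj a b

/-- A d-leaf: a leaf, in a component of order at least three, all of whose neighbours have
degree at least 3. -/
def IsDLeaf {V : Type*} (G : SimpleGraph V) (v : V) : Prop :=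
  deg G v = 1 ∧ 3 ≤ (G.connectedComponentMk v).supp.ncard ∧ ∀ u, G.Adj v u → 3 ≤ deg G u

/-- A peripheral leaf: a leaf at the end of some longest path. -/
def IsPeripheralLeaf {V : Type*} (G : SimpleGraph V) (v : V) : Prop :=
  deg G v = 1 ∧ ∃ (u : V) (p : G.Walk v u), p.IsPath ∧ p.length = diamNat G

/-- An endpoint of the skeleton path: a skeleton vertex of skeleton-degree at most 1. -/
def IsSkelEndpoint {V : Type*} (G : SimpleGraph V) (y : V) : Prop :=
  ∃ h : 2 ≤ deg G y, deg (skeleton G) ⟨y, h⟩ ≤ 1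


/-! A card isomorphism `λ ∈ B_U` matches the neighbours of `u ≠ w` other than `w` with the
neighbours of `λ u` other than `λ w`, so `d(u) + [λ u ∼ λ w] = d(λ u) + [u ∼ w]`; counting edges
of `U⁺ - w ≅ U⁺ - λ w` shows that `λ w` is again a leaf. If `λ w` were adjacent to `λ x₀`, then
`λ` would also carry the edge `w x₀` to an edge and be an automorphism; hence
`d(λ x₀) = d(x₀) - 1`. When `λ² x₀ = x₀`, the identity at `u = λ x₀` (not adjacent to `w`) reads
`d(λ x₀) + [x₀ ∼ λ w] = d(x₀)`, so `x₀ ∼ λ w`. -/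

section CardIso

variable {V : Type*} {G : SimpleGraph V} {u v w : V} {l : Equiv.Perm V}

lemma adj_iff_eq_of_deg_eq_one (hv : deg G v = 1) (huv : G.Adj v u) {a : V} :
    G.Adj v a ↔ a = u := by
  obtain ⟨b, hb⟩ := Set.ncard_eq_one.mp hv
  have hu : u ∈ G.neighborSet v := huv
  rw [hb, Set.mem_singleton_iff] at hu
  change a ∈ G.neighborSet v ↔ _
  rw [hb, Set.mem_singleton_iff, hu]

lemma deg_eq_degree [Fintype (G.neighborSet v)] : deg G v = G.degree v := by
  rw [deg, Set.ncard_eq_toFinset_card']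
  rfl

lemma ncard_neighborSet_diff_add_ite [G.LocallyFinite] (u a : V) [Decidable (G.Adj u a)] :
    (G.neighborSet u \ {a}).ncard + (if G.Adj u a then 1 else 0) = deg G u := by
  split_ifs with hua
  · exact Set.ncard_sdiff_singleton_add_one hua (Set.toFinite _)
  · rw [add_zero, Set.sdiff_singleton_eq_self (show a ∉ G.neighborSet u from hua)]
    rfl

lemma IsCardIso.image_neighborSet_diff (h : IsCardIso G w l) (hu : u ≠ w) :
    l '' (G.neighborSet u \ {w}) = G.neighborSet (l u) \ {l w} := by
  ext b
  obtain ⟨a, rfl⟩ := l.surjective b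
  simp only [l.injective.mem_set_image, Set.mem_sdiff, mem_neighborSet, Set.mem_singleton_iff,
    l.injective.eq_iff]
  exact and_congr_left fun ha => h u a hu ha

lemma IsCardIso.deg_add_ite_eq [G.LocallyFinite] (h : IsCardIso G w l) (hu : u ≠ w)
    [Decidable (G.Adj u w)] [Decidable (G.Adj (l u) (l w))] :
    deg G u + (if G.Adj (l u) (l w) then 1 else 0) =
      deg G (l u) + (if G.Adj u w then 1 else 0) := by
  have hcard : (G.neighborSet u \ {w}).ncard = (G.neighborSet (l u) \ {l w}).ncard := by
    rw [← h.image_neighborSet_diff hu, Set.ncard_image_of_injective _ l.injective]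
  have := ncard_neighborSet_diff_add_ite (G := G) u w
  have := ncard_neighborSet_diff_add_ite (G := G) (l u) (l w)
  omega

def IsCardIso.iso (h : IsCardIso G w l) : G.induce {w}ᶜ ≃g G.induce {l w}ᶜ where
  toEquiv := l.subtypeEquiv fun _ => l.injective.ne_iff.symm
  map_rel_iff' := fun {a b} => (h a b a.2 b.2).symm

lemma IsCardIso.deg_apply_self [Fintype V] (h : IsCardIso G w l) : deg G (l w) = deg G w := by
  classical
  have hedges := h.iso.card_edgeFinset_eq
  rw [card_edgeFinset_induce_compl_singleton, card_edgeFinset_induce_compl_singleton,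
    card_edgeFinset_deleteIncidenceSet, card_edgeFinset_deleteIncidenceSet] at hedges
  have := G.degree_le_card_edgeFinset w
  have := G.degree_le_card_edgeFinset (l w)
  rw [deg_eq_degree, deg_eq_degree]
  omega

lemma IsCardIso.isAutG_of_adj [Fintype V] (h : IsCardIso G w l) (hw : deg G w = 1)
    (hwv : G.Adj w v) (hlwv : G.Adj (l w) (l v)) : IsAutG G l := by
  have hlw : deg G (l w) = 1 := h.deg_apply_self.trans hw
  have hleaf : ∀ b, G.Adj (l w) (l b) ↔ G.Adj w b := fun b => by
    rw [adj_iff_eq_of_deg_eq_one hlw hlwv, adj_iff_eq_of_deg_eq_one hw hwv, l.injective.eq_iff]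
  intro a b
  by_cases ha : a = w
  · exact ha ▸ hleaf b
  by_cases hb : b = w
  · rw [G.adj_comm, G.adj_comm a, hb]
    exact hleaf a
  exact (h a b ha hb).symm

lemma IsCardIso.deg_eq_deg_apply_add_one [Fintype V] (h : IsCardIso G w l) (hl : ¬ IsAutG G l)
    (hw : deg G w = 1) (hwv : G.Adj w v) : deg G v = deg G (l v) + 1 := by
  classical
  have hlv : ¬ G.Adj (l v) (l w) := fun hlv => hl (h.isAutG_of_adj hw hwv hlv.symm)
  simpa [hlv, hwv.symm] using h.deg_add_ite_eq hwv.ne'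

lemma IsCardIso.adj_of_deg_apply_eq_add_one [G.LocallyFinite] (h : IsCardIso G w l)
    (hu : u ≠ w) (huw : ¬ G.Adj u w) (hdeg : deg G (l u) = deg G u + 1) :
    G.Adj (l u) (l w) := by
  classical
  by_contra hlu
  simpa [hlu, huw, hdeg] using h.deg_add_ite_eq hu

lemma IsCardIso.adj_of_apply_apply_eq [Fintype V] (h : IsCardIso G w l) (hl : ¬ IsAutG G l)
    (hw : deg G w = 1) (hwv : G.Adj w v) (hl2 : l (l v) = v) : G.Adj (l w) v := by
  classical
  have hdeg := h.deg_eq_deg_apply_add_one hl hw hwv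
  have hlvw : l v ≠ w := by
    intro hlvw
    have := h.deg_apply_self
    rw [← hlvw, hl2] at this
    omega
  have hlvv : l v ≠ v := fun hlvv => by rw [hlvv] at hdeg; omega
  have hlv_not_adj : ¬ G.Adj (l v) w := fun hadj =>
    hlvv ((adj_iff_eq_of_deg_eq_one hw hwv).mp hadj.symm)
  have := h.adj_of_deg_apply_eq_add_one hlvw hlv_not_adj (by rw [hl2, hdeg])
  rwa [hl2, G.adj_comm] at this

end CardIso

theorem stmt13_general {V : Type*} [Fintype V] (Up : SimpleGraph V)
    (c : ℕ) (x : ZMod c → V)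
    (w : V) (hw : deg Up w = 1) (hwx0 : Up.Adj w (x 0)) :
    (∀ l : Equiv.Perm V, IsCardIso Up w l → ¬ IsAutG Up l →
      l (l (x 0)) = x 0 → Up.Adj (l w) (x 0)) ∧
    (∀ l : Equiv.Perm V, IsCardIso Up w l → ¬ IsAutG Up l →
      (∃ α : ZMod c, ∀ i, l (x i) = x (α - i)) →
      deg Up (l w) = 1 ∧ Up.Adj (l w) (x 0)) := by
  refine ⟨fun l h hl hl2 => h.adj_of_apply_apply_eq hl hw hwx0 hl2, ?_⟩
  rintro l h hl ⟨α, hα⟩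
  have hl2 : l (l (x 0)) = x 0 := by rw [hα 0, sub_zero, hα α, sub_self]
  exact ⟨h.deg_apply_self.trans hw, h.adj_of_apply_apply_eq hl hw hwx0 hl2⟩

theorem stmt13 {V : Type*} [Fintype V] (Up : SimpleGraph V) (hSun : IsSunshine Up)
    (c : ℕ) (hc : 6 ≤ c) (x : ZMod c → V) (hinj : Function.Injective x)
    (hcyc : ∀ i, Up.Adj (x i) (x (i + 1)))
    (hskel : ∀ v : V, 2 ≤ deg Up v ↔ v ∈ Set.range x)
    (w : V) (ν : ZMod c) (hw : deg Up w = 1) (hwx0 : Up.Adj w (x 0))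
    (hnu : deg Up (x ν) = 2)
    (hU : IsSunshine (Up.induce {u : V | u ≠ w}))
    (hT : IsCaterpillar (Up.induce {u : V | u ≠ x ν})) :
    (∀ l : Equiv.Perm V, IsCardIso Up w l → ¬ IsAutG Up l →
      l (l (x 0)) = x 0 → Up.Adj (l w) (x 0)) ∧
    (∀ l : Equiv.Perm V, IsCardIso Up w l → ¬ IsAutG Up l →
      (∃ α : ZMod c, ∀ i, l (x i) = x (α - i)) →
      deg Up (l w) = 1 ∧ Up.Adj (l w) (x 0)) :=
  stmt13_general Up c x w hw hwx0
end

section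
/- With U⁺, w, x₀, and B_U as above: if there exists λ ∈ B_U acting as a rotation on the cycle, with λ ∈ Aut(U⁺) and λ(x₀) ≠ x₀ (a non-trivial rotation automorphism), then every element of B_U is an automorphism of U⁺, i.e., B_U = Aut(U⁺). -/
open SimpleGraph

/-!
Away from the leaf `w`, a card isomorphism `θ : U⁺ - w ≅ U⁺ - θ w` preserves adjacency, hence
degrees up to the two leaves, so it maps the cycle onto itself as a rotation or a reflection
`i ↦ a + s i`, and `θ w` is again a leaf, hanging at some `x β`. Comparing degrees,
`deg (x i) + [a + s i = β] = deg (x (a + s i)) + [i = 0]`. If `a ≠ β`, the case `i = 0` gives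
`deg (x a) < deg (x 0)`, while a rotation automorphism by `α ≠ 0` makes the degree sequence
`α`-periodic, and the case `i = α` gives `deg (x a) ≥ deg (x 0)`. Hence `θ (x 0) = x β` is the
neighbour of `θ w`, and `θ` is an automorphism.
-/

section ZModCycle

variable {c : ℕ}

theorem ZMod.two_ne_zero_of_three_le (hc : 3 ≤ c) : (2 : ZMod c) ≠ 0 := by
  have h : ((2 : ℕ) : ZMod c) ≠ 0 := by
    rw [Ne, ZMod.natCast_eq_zero_iff]
    exact fun h => absurd (Nat.le_of_dvd two_pos h) (by omega)
  exact_mod_cast h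

theorem ZMod.eq_apply_zero_of_forall_add_one [NeZero c] {X : Type*} {f : ZMod c → X}
    (h : ∀ i, f (i + 1) = f i) (i : ZMod c) : f i = f 0 := by
  obtain ⟨n, rfl⟩ := ZMod.natCast_zmod_surjective i
  induction n with
  | zero => simp
  | succ n ih => rw [Nat.cast_succ, h, ih]

theorem ZMod.exists_eq_add_mul_of_injective (hc : 3 ≤ c) {σ : ZMod c → ZMod c}
    (hσ : Function.Injective σ) (hstep : ∀ i, σ (i + 1) = σ i + 1 ∨ σ (i + 1) = σ i - 1) :
    ∃ s : ZMod c, (s = 1 ∨ s = -1) ∧ ∀ i, σ i = σ 0 + s * i := by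
  have : NeZero c := ⟨by omega⟩
  set s : ZMod c → ZMod c := fun i => σ (i + 1) - σ i with hs_def
  have hs : ∀ i, s i = 1 ∨ s i = -1 := fun i =>
    (hstep i).imp (fun h => by simp [s, h]) (fun h => by simp [s, h])
  -- two opposite consecutive steps would give `σ (i + 2) = σ i`
  have hs_succ : ∀ i, s (i + 1) = s i := by
    intro i
    by_contra hne
    have hback : s (i + 1) + s i = 0 := by
      rcases hs i with h | h <;> rcases hs (i + 1) with h' | h' <;> simp_all
    have hσ2 : σ (i + 1 + 1) = σ i := by
      simp only [hs_def] at hback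
      linear_combination hback
    exact ZMod.two_ne_zero_of_three_le hc (by linear_combination hσ hσ2)
  refine ⟨s 0, hs 0, fun i => ?_⟩
  have hconst := ZMod.eq_apply_zero_of_forall_add_one (f := fun i => σ i - s 0 * i)
    (fun i => by
      have h := ZMod.eq_apply_zero_of_forall_add_one hs_succ i
      simp only [hs_def] at h ⊢
      linear_combination h) i
  simp only [mul_zero, sub_zero] at hconst
  linear_combination hconst

theorem eq_of_periodic_of_deg_balance {d : ZMod c → ℕ} {α a s β : ZMod c} (hα : α ≠ 0)
    (hper : ∀ j, d (α + j) = d j) (hs : s = 1 ∨ s = -1)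
    (hbal : ∀ i, d i + (if a + s * i = β then 1 else 0) =
      d (a + s * i) + (if i = 0 then 1 else 0)) :
    a = β := by
  have hdα : d (a + s * α) = d a := by
    rcases hs with rfl | rfl
    · rw [one_mul, add_comm, hper]
    · rw [← hper (a + -1 * α)]; ring_nf
  have h0 := hbal 0
  have hα' := hbal α
  rw [hdα, ← add_zero α, hper, add_zero, if_neg hα] at hα'
  simp only [mul_zero, add_zero, if_true] at h0
  by_contra hne
  rw [if_neg hne] at h0
  split_ifs at hα' <;> omega

end ZModCycle

section Degree

variable {V : Type*} {G : SimpleGraph V}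

theorem Set.ncard_eq_ncard_diff_singleton_add_ite {α : Type*} {s : Set α} (hs : s.Finite)
    (a : α) [Decidable (a ∈ s)] : s.ncard = (s \ {a}).ncard + if a ∈ s then 1 else 0 := by
  split_ifs with h
  · exact (Set.ncard_sdiff_singleton_add_one h hs).symm
  · rw [Set.sdiff_singleton_eq_self h, add_zero]

theorem neighborSet_eq_singleton_of_deg_eq_one {u v : V} (hu : deg G u = 1) (huv : G.Adj u v) :
    G.neighborSet u = {v} := by
  obtain ⟨z, hz⟩ := Set.ncard_eq_one.mp hu
  have hv : v ∈ G.neighborSet u := huv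
  rw [hz, Set.mem_singleton_iff] at hv
  rw [hz, hv]

theorem adj_iff_eq_of_neighborSet_eq {u v w : V} (h : G.neighborSet w = {u}) :
    G.Adj v w ↔ v = u := by
  rw [G.adj_comm, ← mem_neighborSet, h, Set.mem_singleton_iff]

theorem one_le_deg_of_connected [Finite V] (hG : G.Connected) {u v : V} (huv : u ≠ v) :
    1 ≤ deg G v :=
  (Set.ncard_pos (Set.toFinite _)).2 ((hG u v).nonempty_neighborSet_right huv)

theorem SimpleGraph.Reachable.mem_of_forall_adj_mem {S : Set V}
    (hS : ∀ a ∈ S, ∀ b, G.Adj a b → b ∈ S) {u v : V} (hu : u ∈ S) (h : G.Reachable u v) :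
    v ∈ S := by
  obtain ⟨p⟩ := h
  induction p with
  | nil => exact hu
  | cons hadj _ ih => exact ih (hS _ hu _ hadj)

/-- Two adjacent leaves form a component, so they are all of a connected graph. -/
theorem deg_ne_one_of_adj_of_deg_eq_one (hG : G.Connected) {z : V} (hz : 2 ≤ deg G z)
    {u v : V} (huv : G.Adj u v) (hu : deg G u = 1) : deg G v ≠ 1 := by
  intro hv
  have hclosed : ∀ a ∈ ({u, v} : Set V), ∀ b, G.Adj a b → b ∈ ({u, v} : Set V) := by
    rintro a (rfl | rfl) b hab
    · exact Or.inr ((adj_iff_eq_of_neighborSet_eq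
        (neighborSet_eq_singleton_of_deg_eq_one hu huv)).1 hab.symm)
    · exact Or.inl ((adj_iff_eq_of_neighborSet_eq
        (neighborSet_eq_singleton_of_deg_eq_one hv huv.symm)).1 hab.symm)
  rcases (hG u z).mem_of_forall_adj_mem hclosed (Set.mem_insert u _) with rfl | rfl <;> omega

theorem deg_apply_of_isAutG {θ : Equiv.Perm V} (hθ : IsAutG G θ) (v : V) :
    deg G (θ v) = deg G v := by
  have himg : G.neighborSet (θ v) = θ '' G.neighborSet v := by
    ext z
    obtain ⟨u, rfl⟩ := θ.surjective z
    simp only [mem_neighborSet, θ.injective.mem_set_image]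
    exact hθ v u
  rw [deg, himg, Set.ncard_image_of_injective _ θ.injective, deg]

theorem IsAutG.isCardIso {θ : Equiv.Perm V} (hθ : IsAutG G θ) (w : V) : IsCardIso G w θ :=
  fun a b _ _ => (hθ a b).symm

open scoped Classical in
theorem IsCardIso.deg_add_ite_adj_eq [Finite V] {w : V} {θ : Equiv.Perm V}
    (hθ : IsCardIso G w θ) {v : V} (hv : v ≠ w) :
    deg G v + (if G.Adj (θ v) (θ w) then 1 else 0) =
      deg G (θ v) + (if G.Adj v w then 1 else 0) := by
  have himg : θ '' (G.neighborSet v \ {w}) = G.neighborSet (θ v) \ {θ w} := by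
    ext z
    obtain ⟨u, rfl⟩ := θ.surjective z
    simp only [θ.injective.mem_set_image, Set.mem_sdiff, mem_neighborSet, Set.mem_singleton_iff,
      θ.injective.eq_iff]
    exact and_congr_left fun hu => hθ v u hv hu
  rw [deg, deg, Set.ncard_eq_ncard_diff_singleton_add_ite (Set.toFinite (G.neighborSet v)) w,
    Set.ncard_eq_ncard_diff_singleton_add_ite (Set.toFinite (G.neighborSet (θ v))) (θ w), ← himg,
    Set.ncard_image_of_injective _ θ.injective]
  simp only [mem_neighborSet]
  ring

theorem IsCardIso.isAutG_of_neighborSet_eq {w u : V} {θ : Equiv.Perm V} (hθ : IsCardIso G w θ)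
    (hw : G.neighborSet w = {u}) (hθw : G.neighborSet (θ w) = {θ u}) : IsAutG G θ := by
  have hleaf : ∀ b, G.Adj (θ b) (θ w) ↔ G.Adj b w := fun b => by
    rw [adj_iff_eq_of_neighborSet_eq hw, adj_iff_eq_of_neighborSet_eq hθw, θ.injective.eq_iff]
  intro a b
  by_cases ha : a = w
  · rw [ha, G.adj_comm, hleaf, G.adj_comm]
  by_cases hb : b = w
  · rw [hb, hleaf]
  exact (hθ a b ha hb).symm

end Degree

structure IsCycleLabelling {V : Type*} (G : SimpleGraph V) (c : ℕ) (x : ZMod c → V) : Prop where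
  three_le : 3 ≤ c
  injective : Function.Injective x
  adj_add_one : ∀ i, G.Adj (x i) (x (i + 1))
  two_le_deg_iff : ∀ v, 2 ≤ deg G v ↔ v ∈ Set.range x
  deg_skeleton : ∀ v, deg (skeleton G) v = 2

namespace IsCycleLabelling

variable {V : Type*} {G : SimpleGraph V} {c : ℕ} {x : ZMod c → V}

theorem two_le_deg (hx : IsCycleLabelling G c x) (i : ZMod c) : 2 ≤ deg G (x i) :=
  (hx.two_le_deg_iff _).2 ⟨i, rfl⟩

theorem notMem_range_of_neighborSet_eq (hx : IsCycleLabelling G c x) {w u : V}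
    (hw : G.neighborSet w = {u}) : w ∉ Set.range x := by
  rw [← hx.two_le_deg_iff, deg, hw, Set.ncard_singleton]
  omega

theorem adj_sub_one (hx : IsCycleLabelling G c x) (i : ZMod c) : G.Adj (x i) (x (i - 1)) := by
  simpa using (hx.adj_add_one (i - 1)).symm

theorem apply_add_one_ne_apply_sub_one (hx : IsCycleLabelling G c x) (i : ZMod c) :
    x (i + 1) ≠ x (i - 1) := fun h =>
  ZMod.two_ne_zero_of_three_le hx.three_le (by linear_combination hx.injective h)

theorem eq_add_one_or_eq_sub_one_of_adj (hx : IsCycleLabelling G c x) {i j : ZMod c}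
    (h : G.Adj (x i) (x j)) : j = i + 1 ∨ j = i - 1 := by
  let y : ZMod c → {v : V | 2 ≤ deg G v} := fun k => ⟨x k, hx.two_le_deg k⟩
  have hN : {y (i + 1), y (i - 1)} = (skeleton G).neighborSet (y i) := by
    have hdeg : ((skeleton G).neighborSet (y i)).ncard = 2 := hx.deg_skeleton (y i)
    refine Set.eq_of_subset_of_ncard_le ?_ ?_ (Set.finite_of_ncard_ne_zero (by omega))
    · rintro b (rfl | rfl)
      exacts [hx.adj_add_one i, hx.adj_sub_one i]
    · rw [hdeg, Set.ncard_pair fun h =>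
        hx.apply_add_one_ne_apply_sub_one i (congrArg Subtype.val h)]
  have hj : y j ∈ (skeleton G).neighborSet (y i) := h
  rw [← hN] at hj
  exact hj.imp (fun h => hx.injective (congrArg Subtype.val h))
    (fun h => hx.injective (congrArg Subtype.val h))

theorem three_le_deg_of_adj (hx : IsCycleLabelling G c x) {w : V} (hw : w ∉ Set.range x)
    {i : ZMod c} (h : G.Adj w (x i)) : 3 ≤ deg G (x i) := by
  have hsub : {w, x (i + 1), x (i - 1)} ⊆ G.neighborSet (x i) := by
    rintro z (rfl | rfl | rfl)
    exacts [h.symm, hx.adj_add_one i, hx.adj_sub_one i]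
  have hfin : (G.neighborSet (x i)).Finite :=
    Set.finite_of_ncard_ne_zero (by have := hx.two_le_deg i; unfold deg at this; omega)
  calc 3 = ({w, x (i + 1), x (i - 1)} : Set V).ncard := by
        rw [Set.ncard_insert_of_notMem (by rintro (h | h) <;> exact hw ⟨_, h.symm⟩),
          Set.ncard_pair (hx.apply_add_one_ne_apply_sub_one i)]
    _ ≤ deg G (x i) := Set.ncard_le_ncard hsub hfin

theorem exists_affine_of_isCardIso [Finite V] (hx : IsCycleLabelling G c x) {w : V}
    (hw : G.neighborSet w = {x 0}) {θ : Equiv.Perm V} (hθ : IsCardIso G w θ) :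
    ∃ a s : ZMod c, (s = 1 ∨ s = -1) ∧ ∀ i, θ (x i) = x (a + s * i) := by
  have hw_range := hx.notMem_range_of_neighborSet_eq hw
  have hxw : ∀ i, x i ≠ w := fun i h => hw_range ⟨i, h⟩
  have hmem : ∀ i, θ (x i) ∈ Set.range x := by
    intro i
    rw [← hx.two_le_deg_iff]
    have hbal := hθ.deg_add_ite_adj_eq (hxw i)
    rw [adj_iff_eq_of_neighborSet_eq hw, hx.injective.eq_iff] at hbal
    by_cases hi : i = 0
    · subst hi
      have h3 := hx.three_le_deg_of_adj hw_range
        (by rw [← mem_neighborSet, hw]; rfl : G.Adj w (x 0))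
      split_ifs at hbal <;> omega
    · have h2 := hx.two_le_deg i
      split_ifs at hbal <;> omega
  choose σ hσ using hmem
  have hσ_inj : Function.Injective σ := fun i j h =>
    hx.injective (θ.injective (by rw [← hσ, ← hσ, h]))
  have hstep (i : ZMod c) : σ (i + 1) = σ i + 1 ∨ σ (i + 1) = σ i - 1 := by
    apply hx.eq_add_one_or_eq_sub_one_of_adj
    rw [hσ, hσ]
    exact (hθ _ _ (hxw i) (hxw (i + 1))).1 (hx.adj_add_one i)
  obtain ⟨s, hs, hσs⟩ := ZMod.exists_eq_add_mul_of_injective hx.three_le hσ_inj hstep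
  exact ⟨σ 0, s, hs, fun i => by rw [← hσ, hσs]⟩

theorem exists_neighborSet_apply_eq [Finite V] (hx : IsCycleLabelling G c x)
    (hG : G.Connected) {w : V} (hw : G.neighborSet w = {x 0}) {θ : Equiv.Perm V} {a s : ZMod c}
    (hs : s = 1 ∨ s = -1) (hθx : ∀ i, θ (x i) = x (a + s * i)) :
    ∃ β, G.neighborSet (θ w) = {x β} := by
  have hθw : θ w ∉ Set.range x := by
    rintro ⟨j, hj⟩
    refine hx.notMem_range_of_neighborSet_eq hw ⟨s * (j - a), θ.injective ?_⟩
    rw [hθx, ← hj]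
    congr 1
    rcases hs with rfl | rfl <;> ring
  have hdeg : deg G (θ w) = 1 := by
    have h1 := one_le_deg_of_connected hG (u := x 0) fun h => hθw ⟨0, h⟩
    have h2 := mt (hx.two_le_deg_iff (θ w)).1 hθw
    omega
  obtain ⟨y, hy⟩ := Set.ncard_eq_one.mp hdeg
  have hadj : G.Adj (θ w) y := by
    rw [← mem_neighborSet, hy]
    rfl
  have hy2 : 2 ≤ deg G y := by
    have h1 := one_le_deg_of_connected hG hadj.ne
    have h2 := deg_ne_one_of_adj_of_deg_eq_one hG (hx.two_le_deg 0) hadj hdeg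
    omega
  obtain ⟨β, rfl⟩ := (hx.two_le_deg_iff y).1 hy2
  exact ⟨β, hy⟩

theorem isAutG_of_isCardIso [Finite V] (hx : IsCycleLabelling G c x) (hG : G.Connected)
    {w : V} (hw : G.neighborSet w = {x 0}) {α : ZMod c} (hα : α ≠ 0)
    (hper : ∀ j, deg G (x (α + j)) = deg G (x j)) {θ : Equiv.Perm V} (hθ : IsCardIso G w θ) :
    IsAutG G θ := by
  obtain ⟨a, s, hs, hθx⟩ := hx.exists_affine_of_isCardIso hw hθ
  obtain ⟨β, hβ⟩ := hx.exists_neighborSet_apply_eq hG hw hs hθx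
  have hbal (i : ZMod c) : deg G (x i) + (if a + s * i = β then 1 else 0) =
      deg G (x (a + s * i)) + (if i = 0 then 1 else 0) := by
    have h := hθ.deg_add_ite_adj_eq (fun h => hx.notMem_range_of_neighborSet_eq hw ⟨i, h⟩)
    rw [hθx, adj_iff_eq_of_neighborSet_eq hβ, adj_iff_eq_of_neighborSet_eq hw,
      hx.injective.eq_iff, hx.injective.eq_iff] at h
    convert h using 3
  have haβ : a = β := eq_of_periodic_of_deg_balance hα hper hs hbal
  exact hθ.isAutG_of_neighborSet_eq hw (by rw [hθx, mul_zero, add_zero, haβ, hβ])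

end IsCycleLabelling

theorem stmt14_general {V : Type*} [Fintype V] (Up : SimpleGraph V) (hSun : IsSunshine Up)
    (c : ℕ) (hc : 6 ≤ c) (x : ZMod c → V) (hinj : Function.Injective x)
    (hcyc : ∀ i, Up.Adj (x i) (x (i + 1)))
    (hskel : ∀ v : V, 2 ≤ deg Up v ↔ v ∈ Set.range x)
    (w : V) (hw : deg Up w = 1) (hwx0 : Up.Adj w (x 0))
    (l : Equiv.Perm V)
    (hrot : ∃ α : ZMod c, ∀ i, l (x i) = x (α + i))
    (hlA : IsAutG Up l) (hne : l (x 0) ≠ x 0) :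
    ∀ θ : Equiv.Perm V, IsCardIso Up w θ ↔ IsAutG Up θ := by
  have hx : IsCycleLabelling Up c x := ⟨by omega, hinj, hcyc, hskel, hSun.2.2⟩
  obtain ⟨α, hα⟩ := hrot
  have hα0 : α ≠ 0 := fun h => hne (by rw [hα, h, zero_add])
  have hper (j : ZMod c) : deg Up (x (α + j)) = deg Up (x j) := by
    rw [← hα, deg_apply_of_isAutG hlA]
  intro θ
  exact ⟨hx.isAutG_of_isCardIso hSun.1 (neighborSet_eq_singleton_of_deg_eq_one hw hwx0) hα0 hper,
    fun h => h.isCardIso w⟩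

theorem stmt14 {V : Type*} [Fintype V] (Up : SimpleGraph V) (hSun : IsSunshine Up)
    (c : ℕ) (hc : 6 ≤ c) (x : ZMod c → V) (hinj : Function.Injective x)
    (hcyc : ∀ i, Up.Adj (x i) (x (i + 1)))
    (hskel : ∀ v : V, 2 ≤ deg Up v ↔ v ∈ Set.range x)
    (w : V) (ν : ZMod c) (hw : deg Up w = 1) (hwx0 : Up.Adj w (x 0))
    (hnu : deg Up (x ν) = 2)
    (hU : IsSunshine (Up.induce {u : V | u ≠ w}))
    (hT : IsCaterpillar (Up.induce {u : V | u ≠ x ν}))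
    (l : Equiv.Perm V) (hl : IsCardIso Up w l)
    (hrot : ∃ α : ZMod c, ∀ i, l (x i) = x (α + i))
    (hlA : IsAutG Up l) (hne : l (x 0) ≠ x 0) :
    ∀ θ : Equiv.Perm V, IsCardIso Up w θ ↔ IsAutG Up θ :=
  stmt14_general Up hSun c hc x hinj hcyc hskel w hw hwx0 l hrot hlA hne
end
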